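/- arXiv:1405.4487 — 3 statements merged into one kernel-verified Lean document; each statement's English description precedes it below -/
import Mathlib

section
/- The perspective of the log-det mutual-information function is jointly concave: for a fixed complex matrix H ∈ ℂ^{m×n}, the function (t,Q) ↦ t·log₂ Re(det(I + (1/t)·H Q Hᴴ)) is concave on the convex set {(t,Q) : t > 0, Q ∈ ℂ^{n×n} positive semidefinite}, regarded as a subset of ℝ × (Hermitian n×n matrices). -/
/-!
For positive definite `S` and `X`, `log det X ≤ tr (S X) - log det S - n`, with equality at
`S = X⁻¹`: apply `log x ≤ x - 1` to the eigenvalues of `S^{1/2} X S^{1/2}`. Taking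
`X = I + t⁻¹ H Q Hᴴ` and multiplying by `t`, the perspective `t log det X` is the pointwise minimum
over `S` of the functions `t (tr S - log det S - n) + tr (S H Q Hᴴ)`, which are linear in `(t, Q)`;
such a minimum is concave.
-/

open Matrix
open scoped ComplexOrder

theorem concaveOn_of_supporting_affineMap {𝕜 E β : Type*} [Ring 𝕜] [PartialOrder 𝕜]
    [AddCommGroup E] [Module 𝕜 E] [AddCommGroup β] [PartialOrder β] [IsOrderedAddMonoid β]
    [Module 𝕜 β] [PosSMulMono 𝕜 β] {s : Set E} {f : E → β} (hs : Convex 𝕜 s)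
    (h : ∀ z ∈ s, ∃ g : E →ᵃ[𝕜] β, g z = f z ∧ ∀ x ∈ s, f x ≤ g x) : ConcaveOn 𝕜 s f := by
  refine ⟨hs, fun x hx y hy a b ha hb hab => ?_⟩
  obtain ⟨g, hgz, hg⟩ := h _ (hs hx hy ha hb hab)
  calc a • f x + b • f y ≤ a • g x + b • g y :=
        add_le_add (smul_le_smul_of_nonneg_left (hg x hx) ha)
          (smul_le_smul_of_nonneg_left (hg y hy) hb)
    _ = g (a • x + b • y) := (Convex.combo_affine_apply hab).symm
    _ = f (a • x + b • y) := hgz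

namespace Matrix

variable {𝕜 ι κ : Type*} [RCLike 𝕜]

theorem convex_setOf_posSemidef : Convex ℝ {A : Matrix ι ι 𝕜 | A.PosSemidef} :=
  fun _ hA _ hB _ _ ha hb _ => (hA.smul ha).add (hB.smul hb)

variable [Fintype ι] [DecidableEq ι]

theorem IsHermitian.ofReal_re_det {A : Matrix ι ι 𝕜} (hA : A.IsHermitian) :
    ((RCLike.re A.det : ℝ) : 𝕜) = A.det := by
  rw [hA.det_eq_prod_eigenvalues, ← RCLike.ofReal_prod, RCLike.ofReal_re]

theorem IsHermitian.re_det_mul {A B : Matrix ι ι 𝕜} (hA : A.IsHermitian) (hB : B.IsHermitian) :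
    RCLike.re (A * B).det = RCLike.re A.det * RCLike.re B.det := by
  rw [det_mul, ← hA.ofReal_re_det, ← hB.ofReal_re_det, ← RCLike.ofReal_mul]
  simp only [RCLike.ofReal_re]

theorem PosDef.re_det_pos {A : Matrix ι ι 𝕜} (hA : A.PosDef) : 0 < RCLike.re A.det :=
  (RCLike.pos_iff.1 hA.det_pos).1

theorem PosDef.log_det_le_re_trace_sub_card {X : Matrix ι ι 𝕜} (hX : X.PosDef) :
    Real.log (RCLike.re X.det) ≤ RCLike.re X.trace - Fintype.card ι := by
  have hre_det : RCLike.re X.det = ∏ i, hX.isHermitian.eigenvalues i := by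
    rw [hX.isHermitian.det_eq_prod_eigenvalues, ← RCLike.ofReal_prod, RCLike.ofReal_re]
  have hre_trace : RCLike.re X.trace = ∑ i, hX.isHermitian.eigenvalues i := by
    rw [hX.isHermitian.trace_eq_sum_eigenvalues, ← RCLike.ofReal_sum, RCLike.ofReal_re]
  rw [hre_det, hre_trace, Real.log_prod fun i _ => (hX.eigenvalues_pos i).ne',
    Finset.card_univ.symm, Finset.cast_card, ← Finset.sum_sub_distrib]
  exact Finset.sum_le_sum fun i _ => Real.log_le_sub_one_of_pos (hX.eigenvalues_pos i)

open scoped MatrixOrder in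
theorem PosDef.log_det_le_re_trace_mul_sub {S X : Matrix ι ι 𝕜} (hS : S.PosDef)
    (hX : X.PosDef) :
    Real.log (RCLike.re X.det) ≤
      RCLike.re (S * X).trace - Real.log (RCLike.re S.det) - Fintype.card ι := by
  set R := CFC.sqrt S
  have hR : R.IsHermitian := (CFC.sqrt_nonneg S).posSemidef.isHermitian
  have hRR : R * R = S := CFC.sqrt_mul_sqrt_self S hS.posSemidef.nonneg
  have hR_unit : IsUnit R := by
    have h_det_sq : IsUnit (R.det * R.det) := by
      rw [← det_mul, hRR]
      exact (isUnit_iff_isUnit_det S).1 hS.isUnit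
    exact (isUnit_iff_isUnit_det R).2 (isUnit_of_mul_isUnit_left h_det_sq)
  have hRXR : (R * X * R).PosDef := by
    simpa only [hR.eq] using hX.conjTranspose_mul_mul_same (mulVec_injective_of_isUnit hR_unit)
  have h_trace : (R * X * R).trace = (S * X).trace := by
    rw [trace_mul_comm, ← Matrix.mul_assoc, hRR]
  have h_det : RCLike.re (R * X * R).det = RCLike.re S.det * RCLike.re X.det := by
    rw [← hS.isHermitian.re_det_mul hX.isHermitian, ← hRR, det_mul, det_mul, det_mul, det_mul,
      mul_right_comm]
  have := hRXR.log_det_le_re_trace_sub_card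
  rw [h_trace, h_det, Real.log_mul hS.re_det_pos.ne' hX.re_det_pos.ne'] at this
  linarith

theorem PosDef.log_det_eq_re_trace_inv_mul_sub {X : Matrix ι ι 𝕜} (hX : X.PosDef) :
    Real.log (RCLike.re X.det) =
      RCLike.re (X⁻¹ * X).trace - Real.log (RCLike.re X⁻¹.det) - Fintype.card ι := by
  have h_inv_mul : X⁻¹ * X = 1 := nonsing_inv_mul X (isUnit_iff_ne_zero.2 hX.det_pos.ne')
  have h_det := hX.inv.isHermitian.re_det_mul hX.isHermitian
  rw [h_inv_mul, det_one, RCLike.one_re] at h_det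
  have h_log := congrArg Real.log h_det
  rw [Real.log_one, Real.log_mul hX.inv.re_det_pos.ne' hX.re_det_pos.ne'] at h_log
  rw [h_inv_mul, trace_one, RCLike.natCast_re]
  linarith

variable [Fintype κ]

noncomputable def logDetPerspectiveTangent (H : Matrix ι κ 𝕜) (S : Matrix ι ι 𝕜) :
    ℝ × Matrix κ κ 𝕜 →ₗ[ℝ] ℝ where
  toFun p := p.1 * (RCLike.re S.trace - Real.log (RCLike.re S.det) - Fintype.card ι) +
    RCLike.re (S * (H * p.2 * Hᴴ)).trace
  map_add' p q := by
    simp only [Prod.fst_add, Prod.snd_add, Matrix.mul_add, Matrix.add_mul, trace_add, map_add]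
    ring
  map_smul' c p := by
    simp only [Prod.smul_fst, Prod.smul_snd, Matrix.mul_smul, Matrix.smul_mul, trace_smul,
      RCLike.smul_re, smul_eq_mul, RingHom.id_apply]
    ring

theorem mul_sub_log_det_eq_logDetPerspectiveTangent (H : Matrix ι κ 𝕜) (S : Matrix ι ι 𝕜)
    {t : ℝ} (ht : t ≠ 0) (Q : Matrix κ κ 𝕜) :
    t * (RCLike.re (S * (1 + t⁻¹ • (H * Q * Hᴴ))).trace - Real.log (RCLike.re S.det) -
      Fintype.card ι) = logDetPerspectiveTangent H S (t, Q) := by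
  simp only [logDetPerspectiveTangent, LinearMap.coe_mk, AddHom.coe_mk, Matrix.mul_add,
    Matrix.mul_one, Matrix.mul_smul, trace_add, trace_smul, map_add, RCLike.smul_re]
  field_simp
  ring

theorem posDef_one_add_inv_smul {t : ℝ} (ht : 0 < t) (H : Matrix ι κ 𝕜) {Q : Matrix κ κ 𝕜}
    (hQ : Q.PosSemidef) : (1 + t⁻¹ • (H * Q * Hᴴ)).PosDef :=
  PosDef.one.add_posSemidef ((hQ.mul_mul_conjTranspose_same H).smul (inv_nonneg.2 ht.le))

theorem concaveOn_mul_log_det_one_add_inv_smul (H : Matrix ι κ 𝕜) :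
    ConcaveOn ℝ {p : ℝ × Matrix κ κ 𝕜 | 0 < p.1 ∧ p.2.PosSemidef}
      (fun p => p.1 * Real.log (RCLike.re (1 + p.1⁻¹ • (H * p.2 * Hᴴ)).det)) := by
  refine concaveOn_of_supporting_affineMap ((convex_Ioi 0).prod convex_setOf_posSemidef) ?_
  rintro ⟨t₀, Q₀⟩ ⟨ht₀, hQ₀⟩
  have hX₀ := posDef_one_add_inv_smul ht₀ H hQ₀
  refine ⟨(logDetPerspectiveTangent H (1 + t₀⁻¹ • (H * Q₀ * Hᴴ))⁻¹).toAffineMap, ?_, ?_⟩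
  · rw [LinearMap.coe_toAffineMap, ← mul_sub_log_det_eq_logDetPerspectiveTangent _ _ ht₀.ne',
      ← hX₀.log_det_eq_re_trace_inv_mul_sub]
  · rintro ⟨t, Q⟩ ⟨ht, hQ⟩
    rw [LinearMap.coe_toAffineMap, ← mul_sub_log_det_eq_logDetPerspectiveTangent _ _ ht.ne']
    exact mul_le_mul_of_nonneg_left
      (hX₀.inv.log_det_le_re_trace_mul_sub (posDef_one_add_inv_smul ht H hQ)) ht.le

end Matrix

/-- The perspective of the log-det mutual information is jointly concave: for a fixed
channel matrix `H`, the function `(t,Q) ↦ t · log₂ Re(det(I + (1/t) · H Q Hᴴ))` is concave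
on `{(t,Q) : t > 0, Q positive semidefinite}` (a convex set of pairs of a real number and a
Hermitian matrix, since every positive semidefinite matrix is Hermitian). -/
theorem perspective_logdet_concaveOn (m n : ℕ) (H : Matrix (Fin m) (Fin n) ℂ) :
    ConcaveOn ℝ {p : ℝ × Matrix (Fin n) (Fin n) ℂ | 0 < p.1 ∧ p.2.PosSemidef}
      (fun p : ℝ × Matrix (Fin n) (Fin n) ℂ =>
        p.1 * Real.logb 2
          (((1 : Matrix (Fin m) (Fin m) ℂ) + p.1⁻¹ • (H * p.2 * Hᴴ)).det.re)) := by
  have h := (concaveOn_mul_log_det_one_add_inv_smul H).smul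
    (inv_nonneg.2 (Real.log_nonneg one_le_two))
  refine h.congr fun p _ => ?_
  simp only [Real.logb, RCLike.re_to_complex, smul_eq_mul]
  ring
end

section
/- Sufficient condition for optimality of no offloading: with the notation of the context, assume L_max ≥ τ₀·S_app (so processing all bits locally meets the latency constraint) and ε₀ ≤ δ, where δ := β_UL·ē_min + k_{rx,1}·β_DL/R_DL^max + k_{rx,2}·β_DL and ē_min := inf{ e_UL(1/r, 1) : 0 < r ≤ R_UL^max }. Then every feasible point of the offloading problem — i.e., every (S₁, t_UL, t_DL) with 0 ≤ S₁ ≤ S_app, t_UL > 0, β_UL·S₁ ≤ t_UL·R_UL^max, β_DL·S₁ ≤ t_DL·R_DL^max, τ₀·(S_app − S₁) ≤ L_max and t_UL + τ₁·S₁ + t_DL ≤ L_max — has total energy e_UL(t_UL, β_UL·S₁) + ε₀·(S_app − S₁) + k_{rx,1}·t_DL + k_{rx,2}·β_DL·S₁ at least ε₀·S_app, which is the energy of processing all bits locally. -/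
open Matrix
open scoped ComplexOrder

/-!
The minimum uplink energy is positively homogeneous, `e_UL(c t, c s) = c e_UL(t, s)`, because
both the rate constraint and the energy scale linearly in the pair `(t, s)`. Hence uploading
`s > 0` bits in time `t` costs `s · e_UL(t / s, 1) ≥ s · ē_min`, the rate `s / t` being admissible.
Together with the downlink cost this makes offloading `S₁` bits cost at least `δ S₁ ≥ ε₀ S₁`,
the energy saved locally.
-/

/-- Minimum uplink energy: infimum of `k₁ t + k₂ t · Re(Tr Q)` over positive semidefinite
transmit covariance matrices `Q` sustaining `s` bits in time `t` over channel `H` with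
bandwidth `W`. -/
noncomputable def eUL {nF nMT : ℕ} (H : Matrix (Fin nF) (Fin nMT) ℂ)
    (W k1 k2 : ℝ) (t s : ℝ) : ℝ :=
  sInf { e : ℝ | ∃ Q : Matrix (Fin nMT) (Fin nMT) ℂ, Q.PosSemidef ∧
    s ≤ W * t * Real.logb 2 (((1 : Matrix (Fin nF) (Fin nF) ℂ) + H * Q * Hᴴ).det.re) ∧
    e = k1 * t + k2 * t * (Matrix.trace Q).re }

open scoped Pointwise

section UplinkEnergy

variable {nF nMT : ℕ} (H : Matrix (Fin nF) (Fin nMT) ℂ) (W k1 k2 : ℝ)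

lemma Matrix.PosSemidef.trace_re_nonneg {n : Type*} [Fintype n] {Q : Matrix n n ℂ}
    (hQ : Q.PosSemidef) : 0 ≤ Q.trace.re :=
  (Complex.nonneg_iff.mp hQ.trace_nonneg).1

lemma eUL_nonneg {t : ℝ} (hk1 : 0 ≤ k1) (hk2 : 0 ≤ k2) (ht : 0 ≤ t) (s : ℝ) :
    0 ≤ eUL H W k1 k2 t s := by
  refine Real.sInf_nonneg ?_
  rintro e ⟨Q, hQ, -, rfl⟩
  have := hQ.trace_re_nonneg
  positivity

lemma eUL_mul_mul {c : ℝ} (hc : 0 < c) (t s : ℝ) :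
    eUL H W k1 k2 (c * t) (c * s) = c * eUL H W k1 k2 t s := by
  unfold eUL
  rw [← smul_eq_mul c (sInf _), ← Real.sInf_smul_of_nonneg hc.le]
  congr 1
  ext e
  simp only [Set.mem_smul_set, Set.mem_ofPred_eq, smul_eq_mul]
  constructor
  · rintro ⟨Q, hQ, hrate, rfl⟩
    refine ⟨k1 * t + k2 * t * Q.trace.re, ⟨Q, hQ, ?_, rfl⟩, by ring⟩
    exact le_of_mul_le_mul_left (by linarith) hc
  · rintro ⟨_, ⟨Q, hQ, hrate, rfl⟩, rfl⟩
    refine ⟨Q, hQ, ?_, by ring⟩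
    linarith [mul_le_mul_of_nonneg_left hrate hc.le]

/-- The infimum `ē_min` of the per-bit uplink energy over the admissible rates `0 < r ≤ R`. -/
lemma mul_sInf_eUL_per_bit_le {R t s : ℝ} (hk1 : 0 ≤ k1) (hk2 : 0 ≤ k2)
    (hs : 0 ≤ s) (ht : 0 < t) (hrate : s ≤ t * R) :
    s * sInf { e : ℝ | ∃ r : ℝ, 0 < r ∧ r ≤ R ∧ e = eUL H W k1 k2 (1 / r) 1 } ≤
      eUL H W k1 k2 t s := by
  rcases hs.eq_or_lt with rfl | hs
  · simpa using eUL_nonneg H W k1 k2 hk1 hk2 ht.le 0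
  have hbdd : BddBelow { e : ℝ | ∃ r : ℝ, 0 < r ∧ r ≤ R ∧ e = eUL H W k1 k2 (1 / r) 1 } := by
    refine ⟨0, ?_⟩
    rintro e ⟨r, hr, -, rfl⟩
    exact eUL_nonneg H W k1 k2 hk1 hk2 (by positivity) 1
  have hmem : eUL H W k1 k2 (t / s) 1 ∈
      { e : ℝ | ∃ r : ℝ, 0 < r ∧ r ≤ R ∧ e = eUL H W k1 k2 (1 / r) 1 } :=
    ⟨s / t, by positivity, (div_le_iff₀ ht).mpr (by linarith), by rw [one_div_div]⟩
  calc s * sInf _ ≤ s * eUL H W k1 k2 (t / s) 1 := by gcongr; exact csInf_le hbdd hmem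
    _ = eUL H W k1 k2 t s := by
      rw [← eUL_mul_mul H W k1 k2 hs, mul_div_cancel₀ t hs.ne', mul_one]

end UplinkEnergy

theorem no_offloading_optimal_general
    (nF nMT : ℕ) (H : Matrix (Fin nF) (Fin nMT) ℂ)
    (W k1 k2 Sapp ε₀ τ₀ τ₁ βUL βDL RUL RDL krx1 krx2 Lmax : ℝ)
    (hk1 : 0 ≤ k1) (hk2 : 0 < k2)
    (hβUL : 1 ≤ βUL) (hRDL : 0 < RDL)
    (hkrx1 : 0 ≤ krx1)
    (emin δ : ℝ)
    (hemin : emin = sInf { e : ℝ | ∃ r : ℝ, 0 < r ∧ r ≤ RUL ∧ e = eUL H W k1 k2 (1 / r) 1 })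
    (hδ : δ = βUL * emin + krx1 * βDL / RDL + krx2 * βDL)
    (hεδ : ε₀ ≤ δ) :
    ∀ S₁ tUL tDL : ℝ, 0 ≤ S₁ → S₁ ≤ Sapp → 0 < tUL →
      βUL * S₁ ≤ tUL * RUL → βDL * S₁ ≤ tDL * RDL →
      τ₀ * (Sapp - S₁) ≤ Lmax → tUL + τ₁ * S₁ + tDL ≤ Lmax →
      ε₀ * Sapp ≤ eUL H W k1 k2 tUL (βUL * S₁) + ε₀ * (Sapp - S₁) + krx1 * tDL +
        krx2 * (βDL * S₁) := by
  intro S₁ tUL tDL hS₁ _ htUL hULcap hDLcap _ _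
  have hUL : βUL * S₁ * emin ≤ eUL H W k1 k2 tUL (βUL * S₁) :=
    hemin ▸ mul_sInf_eUL_per_bit_le H W k1 k2 hk1 hk2.le (by positivity) htUL hULcap
  have hDL : krx1 * (βDL * S₁ / RDL) ≤ krx1 * tDL :=
    mul_le_mul_of_nonneg_left ((div_le_iff₀ hRDL).mpr hDLcap) hkrx1
  have hoffload : ε₀ * S₁ ≤ δ * S₁ := mul_le_mul_of_nonneg_right hεδ hS₁
  have hδS₁ : δ * S₁ = βUL * S₁ * emin + krx1 * (βDL * S₁ / RDL) + krx2 * (βDL * S₁) := by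
    rw [hδ]; ring
  linarith

/-- Sufficient condition for optimality of no offloading: if local processing meets the
latency constraint (`L_max ≥ τ₀ S_app`) and the local per-bit energy does not exceed the
per-bit offloading energy (`ε₀ ≤ δ`), then every feasible point of the offloading problem
spends at least the all-local energy `ε₀ S_app`. -/
theorem no_offloading_optimal
    (nF nMT : ℕ) (H : Matrix (Fin nF) (Fin nMT) ℂ)
    (W k1 k2 Sapp ε₀ τ₀ τ₁ βUL βDL RUL RDL krx1 krx2 Lmax : ℝ)
    (hW : 0 < W) (hk1 : 0 ≤ k1) (hk2 : 0 < k2)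
    (hSapp : 0 < Sapp) (hε₀ : 0 < ε₀) (hτ₀ : 0 < τ₀) (hτ₁ : 0 < τ₁)
    (hβUL : 1 ≤ βUL) (hβDL : 0 < βDL) (hRUL : 0 < RUL) (hRDL : 0 < RDL)
    (hkrx1 : 0 ≤ krx1) (hkrx2 : 0 ≤ krx2) (hLmax : 0 < Lmax)
    (emin δ : ℝ)
    (hemin : emin = sInf { e : ℝ | ∃ r : ℝ, 0 < r ∧ r ≤ RUL ∧ e = eUL H W k1 k2 (1 / r) 1 })
    (hδ : δ = βUL * emin + krx1 * βDL / RDL + krx2 * βDL)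
    (hfeas : τ₀ * Sapp ≤ Lmax) (hεδ : ε₀ ≤ δ) :
    ∀ S₁ tUL tDL : ℝ, 0 ≤ S₁ → S₁ ≤ Sapp → 0 < tUL →
      βUL * S₁ ≤ tUL * RUL → βDL * S₁ ≤ tDL * RDL →
      τ₀ * (Sapp - S₁) ≤ Lmax → tUL + τ₁ * S₁ + tDL ≤ Lmax →
      ε₀ * Sapp ≤ eUL H W k1 k2 tUL (βUL * S₁) + ε₀ * (Sapp - S₁) + krx1 * tDL +
        krx2 * (βDL * S₁) :=
  no_offloading_optimal_general nF nMT H W k1 k2 Sapp ε₀ τ₀ τ₁ βUL βDL RUL RDL krx1 krx2 Lmax hk1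
    hk2 hβUL hRDL hkrx1 emin δ hemin hδ hεδ
end

section
/- The minimum uplink energy function is continuous on the open quadrant: the function (t,s) ↦ e_UL(t,s) is continuous on {(t,s) ∈ ℝ² : t > 0, s > 0}. -/
open Matrix
open scoped ComplexOrder

/-!
For `t > 0` the rate constraint reads `s / (W t) ≤ log₂ det (1 + H Q Hᴴ)`, so
`e_UL(t, s) = k₁ t + k₂ t · F (s / (W t))` with `F = minTrace H`: `F c` is the least `Re (Tr Q)`
over covariances reaching spectral efficiency `c`. Since `log det` is concave on positive definite
matrices and `Q ↦ 1 + H Q Hᴴ` is affine, mixing feasible covariances is feasible for the mixed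
efficiency, so `F` is convex. Because `H ≠ 0`, large multiples of the identity reach every
efficiency, so `F` is finite on all of `ℝ`, hence continuous.
-/

namespace Matrix

variable {n 𝕜 : Type*} [Fintype n] [DecidableEq n] [RCLike 𝕜]

theorem IsHermitian.det_smul_one_add_smul {C : Matrix n n 𝕜} (hC : C.IsHermitian) (a b : ℝ) :
    (a • 1 + b • C).det = ∏ i, ((a + b * hC.eigenvalues i : ℝ) : 𝕜) := by
  set U := hC.eigenvectorUnitary
  have hdiag : a • 1 + b • diagonal (RCLike.ofReal ∘ hC.eigenvalues) =
      diagonal fun i => ((a + b * hC.eigenvalues i : ℝ) : 𝕜) := by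
    ext i j
    rcases eq_or_ne i j with rfl | h
    · simp [RCLike.real_smul_eq_coe_mul]
    · simp [h]
  have hconj : a • 1 + b • C = (U : Matrix n n 𝕜) *
      diagonal (fun i => ((a + b * hC.eigenvalues i : ℝ) : 𝕜)) * star (U : Matrix n n 𝕜) := by
    rw [← hdiag, ← Unitary.conjStarAlgAut_apply (S := 𝕜), map_add,
      LinearMapClass.map_smul_of_tower, LinearMapClass.map_smul_of_tower, map_one,
      ← hC.spectral_theorem]
  rw [hconj, det_mul, det_mul, mul_right_comm, ← det_mul, Unitary.mul_star_self_of_mem U.2,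
    det_one, one_mul, det_diagonal]

theorem PosSemidef.exists_eigenvalues_pos {P : Matrix n n 𝕜} (hP : P.PosSemidef) (h : P ≠ 0) :
    ∃ i, 0 < hP.1.eigenvalues i := by
  obtain ⟨i, hi⟩ := Function.ne_iff.mp (mt hP.1.eigenvalues_eq_zero_iff.mp h)
  exact ⟨i, (hP.eigenvalues_nonneg i).lt_of_ne' hi⟩

theorem PosSemidef.one_add_mul_eigenvalues_le_re_det {P : Matrix n n 𝕜} (hP : P.PosSemidef)
    {x : ℝ} (hx : 0 ≤ x) (i : n) :
    1 + x * hP.1.eigenvalues i ≤ RCLike.re (1 + x • P).det := by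
  have hev := hP.eigenvalues_nonneg
  rw [← one_smul ℝ (1 : Matrix n n 𝕜), hP.1.det_smul_one_add_smul, ← RCLike.ofReal_prod,
    RCLike.ofReal_re]
  simpa using Finset.prod_le_prod_of_subset_of_one_le (f := fun i => 1 + x * hP.1.eigenvalues i)
    (Finset.subset_univ {i}) (fun j _ => by have := hev j; positivity)
    fun j _ _ => le_add_of_nonneg_right (mul_nonneg hx (hev j))

theorem PosSemidef.re_det_rpow_le_re_det_smul_one_add_smul {C : Matrix n n 𝕜}
    (hC : C.PosSemidef) {a b : ℝ} (ha : 0 ≤ a) (hb : 0 ≤ b) (hab : a + b = 1) :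
    RCLike.re C.det ^ b ≤ RCLike.re (a • 1 + b • C).det := by
  have hev := hC.eigenvalues_nonneg
  rw [hC.1.det_smul_one_add_smul, hC.1.det_eq_prod_eigenvalues, ← RCLike.ofReal_prod,
    ← RCLike.ofReal_prod, RCLike.ofReal_re, RCLike.ofReal_re,
    ← Real.finsetProd_rpow _ _ fun i _ => hev i]
  refine Finset.prod_le_prod (fun i _ => Real.rpow_nonneg (hev i) b) fun i _ => ?_
  simpa using Real.geom_mean_le_arith_mean2_weighted ha hb zero_le_one (hev i) hab

/-- Writing `A = Xᴴ X`, both determinants factor through the congruence by `X`, which reduces the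
claim to the case `A = 1`, i.e. to weighted AM–GM on the eigenvalues of `X⁻¹ᴴ B X⁻¹`. -/
theorem PosDef.re_det_rpow_mul_re_det_rpow_le {A B : Matrix n n 𝕜} (hA : A.PosDef)
    (hB : B.PosDef) {a b : ℝ} (ha : 0 ≤ a) (hb : 0 ≤ b) (hab : a + b = 1) :
    RCLike.re A.det ^ a * RCLike.re B.det ^ b ≤ RCLike.re (a • A + b • B).det := by
  open scoped MatrixOrder in
  obtain ⟨X, rfl⟩ := CStarAlgebra.nonneg_iff_eq_star_mul_self.mp hA.posSemidef.nonneg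
  obtain ⟨α, hα, hdetA⟩ := RCLike.pos_iff_exists_ofReal.mp hA.det_pos
  have hX : IsUnit X.det := isUnit_iff_ne_zero.mpr fun h => hα.ne' (by simpa [h] using hdetA)
  set C := X⁻¹ᴴ * B * X⁻¹
  have hC : C.PosSemidef := hB.posSemidef.conjTranspose_mul_mul_same X⁻¹
  have hBC : B = star X * C * X := by
    simp only [C, Matrix.mul_assoc, nonsing_inv_mul _ hX, Matrix.mul_one]
    rw [← Matrix.mul_assoc, star_eq_conjTranspose, ← conjTranspose_mul, nonsing_inv_mul _ hX,
      conjTranspose_one, Matrix.one_mul]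
  have hdet (M : Matrix n n 𝕜) : RCLike.re (star X * M * X).det = α * RCLike.re M.det := by
    rw [det_mul, det_mul, mul_right_comm, ← det_mul, ← hdetA, RCLike.re_ofReal_mul]
  have hmix : a • (star X * X) + b • B = star X * (a • 1 + b • C) * X := by
    rw [hBC]
    simp only [Matrix.mul_add, Matrix.add_mul, Matrix.mul_smul, Matrix.smul_mul, Matrix.mul_one]
  rw [hmix, hdet, hBC, hdet, ← hdetA, RCLike.ofReal_re,
    Real.mul_rpow hα.le (RCLike.nonneg_iff.mp hC.det_nonneg).1, ← mul_assoc, ← Real.rpow_add hα,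
    hab, Real.rpow_one]
  exact mul_le_mul_of_nonneg_left (hC.re_det_rpow_le_re_det_smul_one_add_smul ha hb hab) hα.le

end Matrix

open scoped Pointwise in
theorem convexOn_sInf_of_smul_add_smul_subset {E : Type*} [AddCommGroup E] [Module ℝ E]
    {S : E → Set ℝ} (hne : ∀ x, (S x).Nonempty) (hbdd : ∀ x, BddBelow (S x))
    (hmix : ∀ ⦃x y : E⦄ ⦃a b : ℝ⦄, 0 ≤ a → 0 ≤ b → a + b = 1 →
      a • S x + b • S y ⊆ S (a • x + b • y)) :
    ConvexOn ℝ Set.univ fun x => sInf (S x) := by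
  refine ⟨convex_univ, fun x _ y _ a b ha hb hab => ?_⟩
  calc sInf (S (a • x + b • y)) ≤ sInf (a • S x + b • S y) :=
        csInf_le_csInf (hbdd _) ((hne x).smul_set.add (hne y).smul_set) (hmix ha hb hab)
    _ = a • sInf (S x) + b • sInf (S y) := by
        rw [csInf_add (hne x).smul_set ((hbdd x).smul_of_nonneg ha) (hne y).smul_set
          ((hbdd y).smul_of_nonneg hb), Real.sInf_smul_of_nonneg ha, Real.sInf_smul_of_nonneg hb]

section UplinkEnergy

variable {m n : Type*} [Fintype m] [Fintype n] [DecidableEq m]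

def feasibleTraces (H : Matrix m n ℂ) (c : ℝ) : Set ℝ :=
  {x | ∃ Q : Matrix n n ℂ, Q.PosSemidef ∧ c ≤ Real.logb 2 (1 + H * Q * Hᴴ).det.re ∧
    x = Q.trace.re}

noncomputable def minTrace (H : Matrix m n ℂ) (c : ℝ) : ℝ := sInf (feasibleTraces H c)

theorem feasibleTraces_bddBelow (H : Matrix m n ℂ) (c : ℝ) : BddBelow (feasibleTraces H c) :=
  ⟨0, by rintro _ ⟨Q, hQ, -, rfl⟩; exact (Complex.nonneg_iff.mp hQ.trace_nonneg).1⟩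

theorem feasibleTraces_nonempty [DecidableEq n] {H : Matrix m n ℂ} (hH : H ≠ 0) (c : ℝ) :
    (feasibleTraces H c).Nonempty := by
  have hP : (H * Hᴴ).PosSemidef := posSemidef_self_mul_conjTranspose H
  obtain ⟨i, hi⟩ := hP.exists_eigenvalues_pos fun h =>
    hH (trace_mul_conjTranspose_self_eq_zero_iff.mp (by rw [h, trace_zero]))
  set x := 2 ^ c / hP.1.eigenvalues i
  have hx : 0 ≤ x := by positivity
  refine ⟨_, x • 1, PosSemidef.one.smul hx, ?_, rfl⟩
  rw [Matrix.mul_smul, Matrix.mul_one, Matrix.smul_mul]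
  calc c = Real.logb 2 (2 ^ c) := (Real.logb_rpow two_pos one_lt_two.ne').symm
    _ ≤ Real.logb 2 (1 + x * hP.1.eigenvalues i) :=
        Real.logb_le_logb_of_le one_lt_two (by positivity) (by simp [x, hi.ne'])
    _ ≤ _ := Real.logb_le_logb_of_le one_lt_two (by positivity)
        (hP.one_add_mul_eigenvalues_le_re_det hx i)

open scoped Pointwise in
theorem smul_feasibleTraces_add_smul_subset (H : Matrix m n ℂ) {a b : ℝ} (ha : 0 ≤ a)
    (hb : 0 ≤ b) (hab : a + b = 1) (c₁ c₂ : ℝ) :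
    a • feasibleTraces H c₁ + b • feasibleTraces H c₂ ⊆ feasibleTraces H (a • c₁ + b • c₂) := by
  rintro _ ⟨_, ⟨_, ⟨Q₁, hQ₁, hc₁, rfl⟩, rfl⟩, _, ⟨_, ⟨Q₂, hQ₂, hc₂, rfl⟩, rfl⟩, rfl⟩
  refine ⟨a • Q₁ + b • Q₂, (hQ₁.smul ha).add (hQ₂.smul hb), ?_, by simp [trace_add, trace_smul]⟩
  set P₁ := 1 + H * Q₁ * Hᴴ
  set P₂ := 1 + H * Q₂ * Hᴴ
  have hP₁ : P₁.PosDef := PosDef.one.add_posSemidef (hQ₁.mul_mul_conjTranspose_same H)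
  have hP₂ : P₂.PosDef := PosDef.one.add_posSemidef (hQ₂.mul_mul_conjTranspose_same H)
  have hd₁ : 0 < P₁.det.re := (Complex.pos_iff.mp hP₁.det_pos).1
  have hd₂ : 0 < P₂.det.re := (Complex.pos_iff.mp hP₂.det_pos).1
  have hmix : 1 + H * (a • Q₁ + b • Q₂) * Hᴴ = a • P₁ + b • P₂ := by
    rw [smul_add, smul_add, add_add_add_comm, ← add_smul, hab, one_smul]
    simp only [Matrix.mul_add, Matrix.add_mul, Matrix.mul_smul, Matrix.smul_mul]
  calc a • c₁ + b • c₂ ≤ a * Real.logb 2 P₁.det.re + b * Real.logb 2 P₂.det.re := by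
        simp only [smul_eq_mul]; gcongr
    _ = Real.logb 2 (P₁.det.re ^ a * P₂.det.re ^ b) := by
        rw [Real.logb_mul (by positivity) (by positivity),
          Real.logb_rpow_eq_mul_logb_of_pos hd₁, Real.logb_rpow_eq_mul_logb_of_pos hd₂]
    _ ≤ _ := by
        rw [hmix]
        exact Real.logb_le_logb_of_le one_lt_two (by positivity)
          (hP₁.re_det_rpow_mul_re_det_rpow_le hP₂ ha hb hab)

theorem continuous_minTrace [DecidableEq n] {H : Matrix m n ℂ} (hH : H ≠ 0) :
    Continuous (minTrace H) :=
  continuousOn_univ.mp <|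
    (convexOn_sInf_of_smul_add_smul_subset (feasibleTraces_nonempty hH)
      (feasibleTraces_bddBelow H) fun _ _ _ _ ha hb hab =>
        smul_feasibleTraces_add_smul_subset H ha hb hab _ _).continuousOn isOpen_univ

end UplinkEnergy

theorem eUL_eq_minTrace {nF nMT : ℕ} {H : Matrix (Fin nF) (Fin nMT) ℂ} (hH : H ≠ 0)
    {W k2 t : ℝ} (hW : 0 < W) (hk2 : 0 ≤ k2) (ht : 0 < t) (k1 s : ℝ) :
    eUL H W k1 k2 t s = k1 * t + k2 * t * minTrace H (s / (W * t)) := by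
  have hWt : 0 < W * t := mul_pos hW ht
  have hmono : Monotone fun x : ℝ => k1 * t + k2 * t * x :=
    monotone_const.add (monotone_id.const_mul (mul_nonneg hk2 ht.le))
  have himage : {e | ∃ Q : Matrix (Fin nMT) (Fin nMT) ℂ, Q.PosSemidef ∧
      s ≤ W * t * Real.logb 2 (1 + H * Q * Hᴴ).det.re ∧ e = k1 * t + k2 * t * Q.trace.re} =
      (fun x => k1 * t + k2 * t * x) '' feasibleTraces H (s / (W * t)) := by
    ext e
    simp only [feasibleTraces, div_le_iff₀' hWt, Set.mem_ofPred_eq, Set.mem_image]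
    grind
  rw [eUL, himage, ← hmono.map_csInf_of_continuousAt (by fun_prop)
    (feasibleTraces_nonempty hH _) (feasibleTraces_bddBelow H _), minTrace]

theorem eUL_continuousOn_general (nF nMT : ℕ) (H : Matrix (Fin nF) (Fin nMT) ℂ) (hH : H ≠ 0)
    (W k1 k2 : ℝ) (hW : 0 < W) (hk2 : 0 < k2) :
    ContinuousOn (fun p : ℝ × ℝ => eUL H W k1 k2 p.1 p.2)
      {p : ℝ × ℝ | 0 < p.1 ∧ 0 < p.2} := by
  have hminTrace : ContinuousOn (fun p : ℝ × ℝ => minTrace H (p.2 / (W * p.1)))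
      {p : ℝ × ℝ | 0 < p.1 ∧ 0 < p.2} :=
    (continuous_minTrace hH).comp_continuousOn <|
      continuousOn_snd.div (by fun_prop) fun p hp => (mul_pos hW hp.1).ne'
  have hformula : ContinuousOn
      (fun p : ℝ × ℝ => k1 * p.1 + k2 * p.1 * minTrace H (p.2 / (W * p.1)))
      {p : ℝ × ℝ | 0 < p.1 ∧ 0 < p.2} :=
    ContinuousOn.add (by fun_prop) (ContinuousOn.mul (by fun_prop) hminTrace)
  exact hformula.congr fun p hp => eUL_eq_minTrace hH hW hk2.le hp.1 _ _

/-- For a nonzero channel, the minimum uplink energy function `(t,s) ↦ e_UL(t,s)` is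
continuous on the open quadrant `{(t,s) : t > 0, s > 0}`. -/
theorem eUL_continuousOn (nF nMT : ℕ) (H : Matrix (Fin nF) (Fin nMT) ℂ) (hH : H ≠ 0)
    (W k1 k2 : ℝ) (hW : 0 < W) (hk1 : 0 ≤ k1) (hk2 : 0 < k2) :
    ContinuousOn (fun p : ℝ × ℝ => eUL H W k1 k2 p.1 p.2)
      {p : ℝ × ℝ | 0 < p.1 ∧ 0 < p.2} :=
  eUL_continuousOn_general nF nMT H hH W k1 k2 hW hk2
end
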